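/- arXiv:0801.4544 — 2 statements merged into one kernel-verified Lean document; each statement's English description precedes it below -/
import Mathlib

section
/- (Universal attainability of Forney's exponents.) Let W be a nonempty compact set of channels and p_X an input pmf such that for every p ∈ W the function R' ↦ E_sp(R', p_X, p) is real-valued, convex, nonincreasing and differentiable on an open interval containing [R, R+Δ], where Δ ≥ 0. Suppose λ > 0 satisfies, for every p ∈ W: λ ≥ −E_sp'(R, p_X, p), 1/λ ≥ −E_sp'(R+Δ, p_X, p), E_sp'(R, p_X, p) · E_sp'(R+Δ, p_X, p) ≤ 1, and R + Δ ≤ I(p_X, p). Then the single penalty function F(t) = Δ + λ|t|⁺ attains, simultaneously for every channel p ∈ W, the exponent pair E_{r,F}(R, p_X, p) = E_sp(R, p_X, p) + Δ and E_{r,|F^{-1}|⁺}(R, p_X, p) = E_sp(R+Δ, p_X, p), where |F^{-1}|⁺(t) = (1/λ)|t − Δ|⁺. -/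
open scoped BigOperators

section Defs

variable {𝒳 𝒴 : Type*} [Fintype 𝒳] [Fintype 𝒴]

/-- `p` is a probability mass function on the finite alphabet `𝒳`. -/
def IsPMF (p : 𝒳 → ℝ) : Prop := (∀ x, 0 ≤ p x) ∧ ∑ x, p x = 1

/-- A channel assigns to each input letter a pmf on `𝒴`. -/
def IsChannel (W : 𝒳 → 𝒴 → ℝ) : Prop := ∀ x, IsPMF (W x)

/-- Conditional Kullback–Leibler divergence `D(q ‖ W | pX)`, base-2 logarithms. -/
noncomputable def condKL (pX : 𝒳 → ℝ) (q W : 𝒳 → 𝒴 → ℝ) : ℝ :=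
  ∑ x, ∑ y, pX x * q x y * Real.logb 2 (q x y / W x y)

/-- Mutual information `I(pX, q)` of the joint pmf `(x, y) ↦ pX x * q x y`. -/
noncomputable def mutInfo (pX : 𝒳 → ℝ) (q : 𝒳 → 𝒴 → ℝ) : ℝ :=
  ∑ x, ∑ y, pX x * q x y * Real.logb 2 (q x y / ∑ x', pX x' * q x' y)

/-- Modified random-coding exponent `E_{r,F}(R, pX, W)`. -/
noncomputable def ErF (F : ℝ → ℝ) (R : ℝ) (pX : 𝒳 → ℝ) (W : 𝒳 → 𝒴 → ℝ) : ℝ :=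
  sInf {v : ℝ | ∃ q : 𝒳 → 𝒴 → ℝ, IsChannel q ∧ v = condKL pX q W + F (mutInfo pX q - R)}

/-- Sphere-packing exponent `E_sp(R, pX, W)`, with value `+∞` if no conditional pmf
satisfies the mutual-information constraint. -/
noncomputable def EspE (R : ℝ) (pX : 𝒳 → ℝ) (W : 𝒳 → 𝒴 → ℝ) : EReal :=
  sInf {v : EReal | ∃ q : 𝒳 → 𝒴 → ℝ,
    IsChannel q ∧ mutInfo pX q ≤ R ∧ v = (condKL pX q W : EReal)}

/-- `E_{r,F}` for a class of channels (infimum over the class). -/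
noncomputable def ErFW (F : ℝ → ℝ) (R : ℝ) (pX : 𝒳 → ℝ) (𝒲 : Set (𝒳 → 𝒴 → ℝ)) : ℝ :=
  sInf {v : ℝ | ∃ p ∈ 𝒲, v = ErF F R pX p}

/-- `E_sp` for a class of channels (infimum over the class). -/
noncomputable def EspEW (R : ℝ) (pX : 𝒳 → ℝ) (𝒲 : Set (𝒳 → 𝒴 → ℝ)) : EReal :=
  sInf {v : EReal | ∃ p ∈ 𝒲, v = EspE R pX p}

end Defs

open Real Set

/-!
Both `D(q ‖ p | pX)` and `I(pX, q)` are convex in `q` (the latter by the log-sum inequality, the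
output marginal being linear in `q`). Mixing a conditional pmf `q` with near-optimizers for
`E_sp(s)` therefore puts `E_sp` below the chord from `(s, E_sp(s))` to `(I(pX, q), D(q ‖ p | pX))`,
so the tangent of the convex function `E_sp` at `s` lies below every such point with
`I(pX, q) > s`, even when `I(pX, q)` lies beyond the interval on which `E_sp` is known.
Consequently a penalty `F` equal to `d` up to `k` and growing at least with slope `-E_sp'(R + k)`
after it gives `E_{r,F}(R) = E_sp(R + k) + d`: below the threshold the infimum is `E_sp(R + k)`,
above it the penalty pays for the descent along the tangent. The two exponents are the cases
`k = 0`, `d = Δ`, slope `λ` and `k = Δ`, `d = 0`, slope `1/λ`.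
-/

lemma convexOn_mul_logb {b : ℝ} (hb : 1 < b) :
    ConvexOn ℝ (Ici 0) (fun t : ℝ => t * logb b t) := by
  refine (convexOn_mul_log.smul (inv_nonneg.2 (log_pos hb).le)).congr fun t _ => ?_
  simp only [smul_eq_mul, logb]
  ring

lemma convexOn_mul_logb_div {b : ℝ} (hb : 1 < b) (w : ℝ) :
    ConvexOn ℝ (Ici 0) (fun u : ℝ => u * logb b (u / w)) := by
  rcases eq_or_ne w 0 with rfl | hw
  · simpa using convexOn_const (0 : ℝ) (convex_Ici (0 : ℝ))
  refine ((convexOn_mul_logb hb).add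
    ((LinearMap.mulRight ℝ (-logb b w)).convexOn (convex_Ici 0))).congr fun u _ => ?_
  rcases eq_or_ne u 0 with rfl | hu
  · simp
  simp [logb_div hu hw]
  ring

lemma add_mul_logb_div_add_le {b u₁ u₂ v₁ v₂ : ℝ} (hb : 1 < b) (hu₁ : 0 ≤ u₁) (hu₂ : 0 ≤ u₂)
    (hv₁ : 0 ≤ v₁) (hv₂ : 0 ≤ v₂) (h₁ : v₁ = 0 → u₁ = 0) (h₂ : v₂ = 0 → u₂ = 0) :
    (u₁ + u₂) * logb b ((u₁ + u₂) / (v₁ + v₂)) ≤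
      u₁ * logb b (u₁ / v₁) + u₂ * logb b (u₂ / v₂) := by
  rcases hv₁.eq_or_lt with rfl | hv₁
  · simp [h₁ rfl]
  rcases hv₂.eq_or_lt with rfl | hv₂
  · simp [h₂ rfl]
  have hv : 0 < v₁ + v₂ := by positivity
  have hmean : v₁ / (v₁ + v₂) * (u₁ / v₁) + v₂ / (v₁ + v₂) * (u₂ / v₂) =
      (u₁ + u₂) / (v₁ + v₂) := by
    field_simp
  have key := (convexOn_mul_logb hb).2 (mem_Ici.2 (div_nonneg hu₁ hv₁.le))
    (mem_Ici.2 (div_nonneg hu₂ hv₂.le)) (div_nonneg hv₁.le hv.le) (div_nonneg hv₂.le hv.le)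
    (by field_simp)
  simp only [smul_eq_mul, hmean] at key
  calc (u₁ + u₂) * logb b ((u₁ + u₂) / (v₁ + v₂))
      = (v₁ + v₂) * ((u₁ + u₂) / (v₁ + v₂) * logb b ((u₁ + u₂) / (v₁ + v₂))) := by
        field_simp
    _ ≤ (v₁ + v₂) * (v₁ / (v₁ + v₂) * (u₁ / v₁ * logb b (u₁ / v₁)) +
          v₂ / (v₁ + v₂) * (u₂ / v₂ * logb b (u₂ / v₂))) := by gcongr
    _ = u₁ * logb b (u₁ / v₁) + u₂ * logb b (u₂ / v₂) := by field_simp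

lemma mul_mul_logb_mul_div_mul (b c u v : ℝ) :
    c * u * logb b (c * u / (c * v)) = c * (u * logb b (u / v)) := by
  rcases eq_or_ne c 0 with rfl | hc
  · simp
  rw [mul_div_mul_left _ _ hc, mul_assoc]

lemma eq_zero_of_sum_mul_eq_zero {ι : Type*} [Fintype ι] {f g : ι → ℝ} (hf : ∀ i, 0 ≤ f i)
    (hg : ∀ i, 0 ≤ g i) (h : ∑ i, f i * g i = 0) {i : ι} (hi : f i ≠ 0) : g i = 0 :=
  (mul_eq_zero.1 ((Finset.sum_eq_zero_iff_of_nonneg fun j _ => mul_nonneg (hf j) (hg j)).1 h i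
    (Finset.mem_univ i))).resolve_left hi

section Channel

variable {𝒳 𝒴 : Type*} [Fintype 𝒴]

lemma IsChannel.nonneg {q : 𝒳 → 𝒴 → ℝ} (hq : IsChannel q) : 0 ≤ q :=
  fun x y => (hq x).1 y

lemma convex_setOf_isChannel : Convex ℝ {q : 𝒳 → 𝒴 → ℝ | IsChannel q} := by
  intro q₁ hq₁ q₂ hq₂ a b ha hb hab x
  refine ⟨fun y => ?_, ?_⟩
  · have := (hq₁ x).1 y
    have := (hq₂ x).1 y
    simp only [Pi.add_apply, Pi.smul_apply, smul_eq_mul]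
    positivity
  · simp [Finset.sum_add_distrib, ← Finset.mul_sum, (hq₁ x).2, (hq₂ x).2, hab]

variable [Fintype 𝒳] {pX : 𝒳 → ℝ}

lemma convexOn_condKL (hpX : ∀ x, 0 ≤ pX x) (W : 𝒳 → 𝒴 → ℝ) :
    ConvexOn ℝ (Ici 0) (fun q => condKL pX q W) := by
  refine ⟨convex_Ici 0, fun q₁ hq₁ q₂ hq₂ a b ha hb hab => ?_⟩
  simp only [condKL, smul_eq_mul, Finset.mul_sum, ← Finset.sum_add_distrib]
  gcongr with x _ y _
  have h := (convexOn_mul_logb_div one_lt_two (W x y)).2 (mem_Ici.2 (hq₁ x y))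
    (mem_Ici.2 (hq₂ x y)) ha hb hab
  simp only [smul_eq_mul] at h
  simp only [Pi.add_apply, Pi.smul_apply, smul_eq_mul]
  linarith [mul_le_mul_of_nonneg_left h (hpX x)]

lemma convexOn_mutInfo (hpX : ∀ x, 0 ≤ pX x) :
    ConvexOn ℝ (Ici (0 : 𝒳 → 𝒴 → ℝ)) (fun q => mutInfo pX q) := by
  refine ⟨convex_Ici 0, fun q₁ hq₁ q₂ hq₂ a b ha hb hab => ?_⟩
  simp only [mutInfo, smul_eq_mul, Finset.mul_sum, ← Finset.sum_add_distrib]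
  gcongr with x _ y _
  simp only [Pi.add_apply, Pi.smul_apply, smul_eq_mul]
  rcases eq_or_ne (pX x) 0 with hx | hx
  · simp [hx]
  have hsupp (c : ℝ) {q : 𝒳 → 𝒴 → ℝ} (hq : 0 ≤ q) (h : c * ∑ x', pX x' * q x' y = 0) :
      c * q x y = 0 := by
    rcases mul_eq_zero.1 h with rfl | h
    · exact zero_mul _
    · rw [eq_zero_of_sum_mul_eq_zero hpX (hq · y) h hx, mul_zero]
  have hm : ∑ x', pX x' * (a * q₁ x' y + b * q₂ x' y) =
      a * ∑ x', pX x' * q₁ x' y + b * ∑ x', pX x' * q₂ x' y := by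
    simp only [Finset.mul_sum, ← Finset.sum_add_distrib]
    exact Finset.sum_congr rfl fun x' _ => by ring
  have hm₁ : 0 ≤ ∑ x', pX x' * q₁ x' y :=
    Finset.sum_nonneg fun x' _ => mul_nonneg (hpX x') (hq₁ x' y)
  have hm₂ : 0 ≤ ∑ x', pX x' * q₂ x' y :=
    Finset.sum_nonneg fun x' _ => mul_nonneg (hpX x') (hq₂ x' y)
  have key := add_mul_logb_div_add_le one_lt_two (mul_nonneg ha (hq₁ x y))
    (mul_nonneg hb (hq₂ x y)) (mul_nonneg ha hm₁) (mul_nonneg hb hm₂) (hsupp a hq₁) (hsupp b hq₂)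
  rw [mul_mul_logb_mul_div_mul, mul_mul_logb_mul_div_mul] at key
  rw [hm]
  linarith [mul_le_mul_of_nonneg_left key (hpX x)]

end Channel

section Exponents

variable {𝒳 𝒴 : Type*} [Fintype 𝒳] [Fintype 𝒴] {pX : 𝒳 → ℝ} {q W : 𝒳 → 𝒴 → ℝ}

lemma EspE_le_condKL {r : ℝ} (hq : IsChannel q) (hI : mutInfo pX q ≤ r) :
    EspE r pX W ≤ (condKL pX q W : EReal) :=
  sInf_le ⟨q, hq, hI, rfl⟩

lemma exists_isChannel_condKL_lt_of_EspE_eq {r c ε : ℝ} (h : EspE r pX W = c) (hε : 0 < ε) :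
    ∃ q, IsChannel q ∧ mutInfo pX q ≤ r ∧ condKL pX q W < c + ε := by
  have hlt : EspE r pX W < ((c + ε : ℝ) : EReal) := by
    rw [h]
    exact_mod_cast lt_add_of_pos_right c hε
  obtain ⟨_, ⟨q, hq, hI, rfl⟩, hq'⟩ := sInf_lt_iff.1 hlt
  exact ⟨q, hq, hI, by exact_mod_cast hq'⟩

lemma le_convex_comb_of_EspE_eq (hpX : ∀ x, 0 ≤ pX x) {s t es et θ : ℝ}
    (hs : EspE s pX W = es) (ht : EspE t pX W = et) (hq : IsChannel q)
    (hθ₀ : 0 ≤ θ) (hθ₁ : θ ≤ 1) (hst : θ * mutInfo pX q + (1 - θ) * s ≤ t) :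
    et ≤ θ * condKL pX q W + (1 - θ) * es := by
  have hθ₁' : 0 ≤ 1 - θ := by linarith
  refine le_of_forall_pos_le_add fun ε hε => ?_
  obtain ⟨qs, hqs, hIs, hDs⟩ := exists_isChannel_condKL_lt_of_EspE_eq hs hε
  have hmix := convex_setOf_isChannel hq hqs hθ₀ hθ₁' (add_sub_cancel θ 1)
  have hI := (convexOn_mutInfo hpX).2 hq.nonneg hqs.nonneg hθ₀ hθ₁' (add_sub_cancel θ 1)
  have hD := (convexOn_condKL hpX W).2 hq.nonneg hqs.nonneg hθ₀ hθ₁' (add_sub_cancel θ 1)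
  simp only [smul_eq_mul] at hI hD
  have hIt : mutInfo pX (θ • q + (1 - θ) • qs) ≤ t := by
    nlinarith [mul_le_mul_of_nonneg_left hIs hθ₁']
  have het : et ≤ condKL pX (θ • q + (1 - θ) • qs) W := by
    have := EspE_le_condKL (W := W) hmix hIt
    rwa [ht, EReal.coe_le_coe_iff] at this
  linarith [mul_le_mul_of_nonneg_left hDs.le hθ₁', mul_nonneg hθ₀ hε.le]

variable {a b : ℝ} {e : ℝ → ℝ}

lemma add_deriv_mul_le_condKL (hpX : ∀ x, 0 ≤ pX x)
    (he : ∀ r ∈ Ioo a b, EspE r pX W = e r) (hconv : ConvexOn ℝ (Ioo a b) e)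
    {s : ℝ} (hs : s ∈ Ioo a b) (hd : DifferentiableAt ℝ e s)
    (hq : IsChannel q) (hI : s < mutInfo pX q) :
    e s + deriv e s * (mutInfo pX q - s) ≤ condKL pX q W := by
  set t := min (mutInfo pX q) ((s + b) / 2)
  have hst : s < t := lt_min hI (by linarith [hs.2])
  have ht : t ∈ Ioo a b := ⟨hs.1.trans hst, (min_le_right _ _).trans_lt (by linarith [hs.2])⟩
  set θ := (t - s) / (mutInfo pX q - s)
  have hIs : 0 < mutInfo pX q - s := sub_pos.2 hI
  have hθ : θ * (mutInfo pX q - s) = t - s := div_mul_cancel₀ _ hIs.ne'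
  have hθ₀ : 0 < θ := div_pos (sub_pos.2 hst) hIs
  have hθ₁ : θ ≤ 1 := (div_le_one hIs).2 (by linarith [min_le_left (mutInfo pX q) ((s + b) / 2)])
  have hchord := le_convex_comb_of_EspE_eq hpX (he s hs) (he t ht) hq hθ₀.le hθ₁
    (by linarith)
  have hslope := hconv.deriv_le_slope hs ht hst hd
  rw [slope_def_field, le_div_iff₀ (sub_pos.2 hst)] at hslope
  have : θ * (e s + deriv e s * (mutInfo pX q - s)) ≤ θ * condKL pX q W := by
    rw [mul_add, mul_left_comm, hθ]
    linarith
  exact le_of_mul_le_mul_left this hθ₀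

theorem ErF_eq_of_flat_of_slope (hpX : ∀ x, 0 ≤ pX x)
    (he : ∀ r ∈ Ioo a b, EspE r pX W = e r) (hconv : ConvexOn ℝ (Ioo a b) e)
    {R k d : ℝ} {F : ℝ → ℝ} (hk : R + k ∈ Ioo a b) (hd : DifferentiableAt ℝ e (R + k))
    (hF_flat : ∀ t ≤ k, F t = d) (hF_slope : ∀ t, k < t → d - deriv e (R + k) * (t - k) ≤ F t) :
    ErF F R pX W = e (R + k) + d := by
  set S := {v : ℝ | ∃ q : 𝒳 → 𝒴 → ℝ, IsChannel q ∧ v = condKL pX q W + F (mutInfo pX q - R)}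
  have hlow : ∀ v ∈ S, e (R + k) + d ≤ v := by
    rintro _ ⟨q, hq, rfl⟩
    rcases le_or_gt (mutInfo pX q) (R + k) with hI | hI
    · have := EspE_le_condKL (W := W) hq hI
      rw [he _ hk, EReal.coe_le_coe_iff] at this
      rw [hF_flat _ (by linarith)]
      linarith
    · have hsupp := add_deriv_mul_le_condKL hpX he hconv hk hd hq hI
      have hF := hF_slope _ (by linarith : k < mutInfo pX q - R)
      linarith
  obtain ⟨q₀, hq₀, -⟩ := exists_isChannel_condKL_lt_of_EspE_eq (he _ hk) one_pos
  refine le_antisymm (le_of_forall_pos_lt_add fun ε hε => ?_) (le_csInf ⟨_, q₀, hq₀, rfl⟩ hlow)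
  obtain ⟨q, hq, hI, hD⟩ := exists_isChannel_condKL_lt_of_EspE_eq (he _ hk) hε
  calc ErF F R pX W ≤ condKL pX q W + F (mutInfo pX q - R) := csInf_le ⟨_, hlow⟩ ⟨q, hq, rfl⟩
    _ < e (R + k) + d + ε := by rw [hF_flat _ (by linarith)]; linarith

end Exponents

theorem universal_attainability_Forney_general {𝒳 𝒴 : Type*} [Fintype 𝒳] [Fintype 𝒴]
    (pX : 𝒳 → ℝ) (hpX : IsPMF pX)
    (𝒲 : Set (𝒳 → 𝒴 → ℝ))
    (a b : ℝ) (e : (𝒳 → 𝒴 → ℝ) → ℝ → ℝ)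
    (he : ∀ p ∈ 𝒲, ∀ R' ∈ Set.Ioo a b, EspE R' pX p = (e p R' : EReal))
    (hconv : ∀ p ∈ 𝒲, ConvexOn ℝ (Set.Ioo a b) (e p))
    (hdiff : ∀ p ∈ 𝒲, ∀ R' ∈ Set.Ioo a b, DifferentiableAt ℝ (e p) R')
    (R Δ lam : ℝ) (hΔ : 0 ≤ Δ) (hJ : Set.Icc R (R + Δ) ⊆ Set.Ioo a b)
    (h1 : ∀ p ∈ 𝒲, -deriv (e p) R ≤ lam)
    (h2 : ∀ p ∈ 𝒲, -deriv (e p) (R + Δ) ≤ 1 / lam) :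
    ∀ p ∈ 𝒲,
      ErF (fun t : ℝ => Δ + lam * max t 0) R pX p = e p R + Δ
      ∧ ErF (fun t : ℝ => (1 / lam) * max (t - Δ) 0) R pX p = e p (R + Δ) := by
  intro p hp
  have hR : R ∈ Ioo a b := hJ ⟨le_rfl, by linarith⟩
  have hRΔ : R + Δ ∈ Ioo a b := hJ ⟨by linarith, le_rfl⟩
  constructor
  · have := ErF_eq_of_flat_of_slope hpX.1 (he p hp) (hconv p hp) (k := 0) (d := Δ)
      (F := fun t => Δ + lam * max t 0) (by simpa using hR) (by simpa using hdiff p hp R hR)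
      (fun t ht => by simp [max_eq_right ht])
      (fun t ht => by
        simp only [max_eq_left ht.le, add_zero, sub_zero]
        linarith [mul_le_mul_of_nonneg_right (h1 p hp) ht.le])
    simpa using this
  · have := ErF_eq_of_flat_of_slope hpX.1 (he p hp) (hconv p hp) (k := Δ) (d := 0)
      (F := fun t => 1 / lam * max (t - Δ) 0) hRΔ (hdiff p hp _ hRΔ)
      (fun t ht => by simp [max_eq_right (sub_nonpos.2 ht)])
      (fun t ht => by
        simp only [max_eq_left (sub_nonneg.2 ht.le)]
        linarith [mul_le_mul_of_nonneg_right (h2 p hp) (sub_nonneg.2 ht.le)])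
    simpa using this

/-- universal attainability of Forney's exponents: If for every `p ∈ 𝒲`
the sphere-packing exponent `R' ↦ E_sp(R',pX,p)` (represented by `e p`) is real-valued,
convex, nonincreasing and differentiable on an open interval `(a,b) ⊇ [R,R+Δ]`, and
`λ > 0` satisfies for every `p ∈ 𝒲`: `λ ≥ -E_sp'(R,pX,p)`, `1/λ ≥ -E_sp'(R+Δ,pX,p)`,
`E_sp'(R,pX,p)·E_sp'(R+Δ,pX,p) ≤ 1` and `R+Δ ≤ I(pX,p)`, then the single penalty
`F(t) = Δ + λ|t|⁺` attains, simultaneously for every `p ∈ 𝒲`,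
`E_{r,F}(R,pX,p) = E_sp(R,pX,p) + Δ` and
`E_{r,|F⁻¹|⁺}(R,pX,p) = E_sp(R+Δ,pX,p)`, with `|F⁻¹|⁺(t) = (1/λ)|t-Δ|⁺`. -/
theorem universal_attainability_Forney {𝒳 𝒴 : Type*} [Fintype 𝒳] [Fintype 𝒴]
    (pX : 𝒳 → ℝ) (hpX : IsPMF pX)
    (𝒲 : Set (𝒳 → 𝒴 → ℝ)) (h𝒲ne : 𝒲.Nonempty) (h𝒲cpt : IsCompact 𝒲)
    (h𝒲ch : ∀ p ∈ 𝒲, IsChannel p)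
    (a b : ℝ) (e : (𝒳 → 𝒴 → ℝ) → ℝ → ℝ)
    (he : ∀ p ∈ 𝒲, ∀ R' ∈ Set.Ioo a b, EspE R' pX p = (e p R' : EReal))
    (hconv : ∀ p ∈ 𝒲, ConvexOn ℝ (Set.Ioo a b) (e p))
    (hanti : ∀ p ∈ 𝒲, AntitoneOn (e p) (Set.Ioo a b))
    (hdiff : ∀ p ∈ 𝒲, ∀ R' ∈ Set.Ioo a b, DifferentiableAt ℝ (e p) R')
    (R Δ lam : ℝ) (hΔ : 0 ≤ Δ) (hJ : Set.Icc R (R + Δ) ⊆ Set.Ioo a b) (hlam : 0 < lam)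
    (h1 : ∀ p ∈ 𝒲, -deriv (e p) R ≤ lam)
    (h2 : ∀ p ∈ 𝒲, -deriv (e p) (R + Δ) ≤ 1 / lam)
    (h3 : ∀ p ∈ 𝒲, deriv (e p) R * deriv (e p) (R + Δ) ≤ 1)
    (h4 : ∀ p ∈ 𝒲, R + Δ ≤ mutInfo pX p) :
    ∀ p ∈ 𝒲,
      ErF (fun t : ℝ => Δ + lam * max t 0) R pX p = e p R + Δ
      ∧ ErF (fun t : ℝ => (1 / lam) * max (t - Δ) 0) R pX p = e p (R + Δ) :=
  universal_attainability_Forney_general pX hpX 𝒲 a b e he hconv hdiff R Δ lam hΔ hJ h1 h2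
end

section
/- (Relative minimax characterization.) Let W be a nonempty compact set of channels, p_X an input pmf, α : W → ℝ a bounded continuous function, and define Δ_α E_{r,F}(R, p_X, W) = inf_{p∈W} [E_{r,F}(R, p_X, p) − α(p)] and Δ_α E_sp(R, p_X, W) = inf_{p∈W} [E_sp(R, p_X, p) − α(p)]. Then for every continuous nondecreasing F : ℝ → ℝ, one has Δ_α E_{r,F}(R, p_X, W) ≥ 0 if and only if F(t) ≥ F^{L*}(t) := −Δ_α E_sp(R+t, p_X, W) for every t ∈ ℝ; hence F^{L*} is the pointwise-minimal feasible penalty function for the relative minimax problem and maximizes the relative erasure exponent over all feasible continuous increasing penalty functions. -/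
open scoped BigOperators

/-!
For a single channel `p` and nondecreasing `F`, splitting the infimum over `q` according to
`t = I(pX, q) - R` gives `E_{r,F}(R, p) = inf_t [E_sp(R + t, p) + F t]`. Hence `α p ≤ E_{r,F}(R, p)`
for every `p ∈ 𝒲` iff `α p - F t ≤ E_sp(R + t, p)` for every `p ∈ 𝒲` and every `t`, and exchanging
the two quantifiers turns this into `F ≥ F^{L*}`. On finite alphabets divergence is bounded below
and mutual information on both sides, uniformly over all channels, which keeps these infima
bounded below.

For optimality, a feasible `F` dominates `F*`, so `F⁻¹ ≤ F*⁻¹` and the erasure penalty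
`max 0 ∘ F⁻¹` is dominated by `max 0 ∘ F*⁻¹`. The exponent `E_{r,G}` is monotone in `G`, and the
two erasure exponents differ by a bounded amount, so their infima over `𝒲` compare even for an
unbounded reference `β`.
-/

open Real Function

section InformationBounds

variable {𝒳 𝒴 : Type*} [Fintype 𝒳] [Fintype 𝒴]

lemma IsPMF.le_one {p : 𝒳 → ℝ} (hp : IsPMF p) (x : 𝒳) : p x ≤ 1 :=
  hp.2 ▸ Finset.single_le_sum (fun i _ => hp.1 i) (Finset.mem_univ x)

lemma IsPMF.sum_mul_le_one {pX : 𝒳 → ℝ} (hpX : IsPMF pX) {q : 𝒳 → 𝒴 → ℝ} (hq : IsChannel q)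
    (y : 𝒴) : ∑ x, pX x * q x y ≤ 1 :=
  calc ∑ x, pX x * q x y ≤ ∑ x, pX x :=
        Finset.sum_le_sum fun x _ => mul_le_of_le_one_right (hpX.1 x) ((hq x).le_one y)
    _ = 1 := hpX.2

lemma neg_one_le_mul_mul_log_div {a b w : ℝ} (ha₀ : 0 ≤ a) (ha₁ : a ≤ 1) (hb : 0 ≤ b)
    (hw₀ : 0 ≤ w) (hw₁ : w ≤ 1) : -1 ≤ a * b * log (b / w) := by
  have key : -1 ≤ b * log (b / w) := by
    rcases hw₀.eq_or_lt with rfl | hw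
    · simp
    rcases hb.eq_or_lt with rfl | hb'
    · simp
    calc -1 ≤ b * log b := by linarith [self_sub_one_le_mul_log hb]
      _ ≤ b * log (b / w) := by gcongr; exact le_div_self hb hw hw₁
  nlinarith

lemma mul_mul_log_div_le_one {a b m : ℝ} (ha₀ : 0 ≤ a) (ha₁ : a ≤ 1) (hb₀ : 0 ≤ b)
    (hb₁ : b ≤ 1) (hm : a * b ≤ m) : a * b * log (b / m) ≤ 1 := by
  rcases ha₀.eq_or_lt with rfl | ha
  · simp
  rcases hb₀.eq_or_lt with rfl | hb
  · simp
  have hm₀ : 0 < m := (mul_pos ha hb).trans_le hm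
  have hbm : b / m ≤ a⁻¹ := by
    rw [div_le_iff₀ hm₀]
    calc b = a⁻¹ * (a * b) := by field_simp
      _ ≤ a⁻¹ * m := by gcongr
  calc a * b * log (b / m) ≤ a * b * log a⁻¹ := by gcongr
    _ = b * -(a * log a) := by rw [log_inv]; ring
    _ ≤ 1 := by nlinarith [self_sub_one_le_mul_log ha₀, mul_log_nonpos ha₀ ha₁]

noncomputable def infoBound (𝒳 𝒴 : Type*) [Fintype 𝒳] [Fintype 𝒴] : ℝ :=
  Fintype.card 𝒳 * Fintype.card 𝒴 * (log 2)⁻¹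

lemma mul_mul_logb_eq (a b x : ℝ) : a * b * logb 2 x = a * b * log x * (log 2)⁻¹ := by
  rw [logb, div_eq_mul_inv]; ring

lemma neg_infoBound_le_sum_sum {f : 𝒳 → 𝒴 → ℝ} (hf : ∀ x y, -1 ≤ f x y) :
    -infoBound 𝒳 𝒴 ≤ ∑ x, ∑ y, f x y * (log 2)⁻¹ := by
  have hl : 0 ≤ (log 2)⁻¹ := inv_nonneg.2 (log_nonneg one_le_two)
  calc -infoBound 𝒳 𝒴 = ∑ _x : 𝒳, ∑ _y : 𝒴, -1 * (log 2)⁻¹ := by simp [infoBound]; ring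
    _ ≤ _ := by gcongr with x _ y _; exact hf x y

lemma sum_sum_le_infoBound {f : 𝒳 → 𝒴 → ℝ} (hf : ∀ x y, f x y ≤ 1) :
    ∑ x, ∑ y, f x y * (log 2)⁻¹ ≤ infoBound 𝒳 𝒴 := by
  have hl : 0 ≤ (log 2)⁻¹ := inv_nonneg.2 (log_nonneg one_le_two)
  calc _ ≤ ∑ _x : 𝒳, ∑ _y : 𝒴, 1 * (log 2)⁻¹ := by gcongr with x _ y _; exact hf x y
    _ = infoBound 𝒳 𝒴 := by simp [infoBound]; ring

variable {pX : 𝒳 → ℝ} {q : 𝒳 → 𝒴 → ℝ}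

lemma neg_infoBound_le_condKL (hpX : IsPMF pX) (hq : IsChannel q) {W : 𝒳 → 𝒴 → ℝ}
    (hW : IsChannel W) : -infoBound 𝒳 𝒴 ≤ condKL pX q W := by
  simp only [condKL, mul_mul_logb_eq]
  exact neg_infoBound_le_sum_sum fun x y => neg_one_le_mul_mul_log_div (hpX.1 x)
    (hpX.le_one x) ((hq x).1 y) ((hW x).1 y) ((hW x).le_one y)

lemma neg_infoBound_le_mutInfo (hpX : IsPMF pX) (hq : IsChannel q) :
    -infoBound 𝒳 𝒴 ≤ mutInfo pX q := by
  simp only [mutInfo, mul_mul_logb_eq]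
  exact neg_infoBound_le_sum_sum fun x y => neg_one_le_mul_mul_log_div (hpX.1 x)
    (hpX.le_one x) ((hq x).1 y)
    (Finset.sum_nonneg fun x' _ => mul_nonneg (hpX.1 x') ((hq x').1 y)) (hpX.sum_mul_le_one hq y)

lemma mutInfo_le_infoBound (hpX : IsPMF pX) (hq : IsChannel q) :
    mutInfo pX q ≤ infoBound 𝒳 𝒴 := by
  simp only [mutInfo, mul_mul_logb_eq]
  exact sum_sum_le_infoBound fun x y => mul_mul_log_div_le_one (hpX.1 x) (hpX.le_one x)
    ((hq x).1 y) ((hq x).le_one y)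
    (Finset.single_le_sum (f := fun x' => pX x' * q x' y)
      (fun x' _ => mul_nonneg (hpX.1 x') ((hq x').1 y)) (Finset.mem_univ x))

lemma condKL_self (pX : 𝒳 → ℝ) (p : 𝒳 → 𝒴 → ℝ) : condKL pX p p = 0 :=
  Finset.sum_eq_zero fun x _ => Finset.sum_eq_zero fun y _ => by
    rcases eq_or_ne (p x y) 0 with h | h
    · simp [h]
    · simp [div_self h]

end InformationBounds

section Exponents

variable {𝒳 𝒴 : Type*} [Fintype 𝒳] [Fintype 𝒴] {pX : 𝒳 → ℝ} {p q : 𝒳 → 𝒴 → ℝ}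
  {G H : ℝ → ℝ} {R b : ℝ}

lemma neg_infoBound_add_mem_lowerBounds (hpX : IsPMF pX) (hp : IsChannel p)
    (hG : ∀ q : 𝒳 → 𝒴 → ℝ, IsChannel q → b ≤ G (mutInfo pX q - R)) :
    -infoBound 𝒳 𝒴 + b ∈
      lowerBounds {v | ∃ q, IsChannel q ∧ v = condKL pX q p + G (mutInfo pX q - R)} := by
  rintro _ ⟨q, hq, rfl⟩
  linarith [neg_infoBound_le_condKL hpX hq hp, hG q hq]

lemma ErF_le (hpX : IsPMF pX) (hp : IsChannel p)
    (hG : ∀ q : 𝒳 → 𝒴 → ℝ, IsChannel q → b ≤ G (mutInfo pX q - R)) (hq : IsChannel q) :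
    ErF G R pX p ≤ condKL pX q p + G (mutInfo pX q - R) :=
  csInf_le ⟨_, neg_infoBound_add_mem_lowerBounds hpX hp hG⟩ ⟨q, hq, rfl⟩

lemma le_ErF (hpX : IsPMF pX) (hp : IsChannel p)
    (hG : ∀ q : 𝒳 → 𝒴 → ℝ, IsChannel q → b ≤ G (mutInfo pX q - R)) :
    -infoBound 𝒳 𝒴 + b ≤ ErF G R pX p :=
  le_csInf ⟨_, p, hp, rfl⟩ (neg_infoBound_add_mem_lowerBounds hpX hp hG)

lemma Monotone.le_apply_mutInfo_sub (hG : Monotone G) (hpX : IsPMF pX) (hq : IsChannel q) :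
    G (-infoBound 𝒳 𝒴 - R) ≤ G (mutInfo pX q - R) :=
  hG (by linarith [neg_infoBound_le_mutInfo hpX hq])

lemma coe_le_EspE_iff {x : ℝ} :
    (x : EReal) ≤ EspE R pX p ↔ ∀ q : 𝒳 → 𝒴 → ℝ, IsChannel q → mutInfo pX q ≤ R → x ≤ condKL pX q p := by
  simp only [EspE, le_sInf_iff, Set.mem_ofPred_eq]
  constructor
  · intro h q hq hR
    exact EReal.coe_le_coe_iff.1 (h _ ⟨q, hq, hR, rfl⟩)
  · rintro h _ ⟨q, hq, hR, rfl⟩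
    exact EReal.coe_le_coe_iff.2 (h q hq hR)

theorem le_ErF_iff (hpX : IsPMF pX) (hp : IsChannel p) (hG : Monotone G) {c : ℝ} :
    c ≤ ErF G R pX p ↔ ∀ t, ((c - G t : ℝ) : EReal) ≤ EspE (R + t) pX p := by
  simp only [coe_le_EspE_iff]
  constructor
  · intro h t q hq hqt
    have hErF := ErF_le (R := R) hpX hp (fun q hq => hG.le_apply_mutInfo_sub hpX hq) hq
    linarith [hG (show mutInfo pX q - R ≤ t by linarith)]
  · intro h
    refine le_csInf ⟨_, p, hp, rfl⟩ ?_
    rintro _ ⟨q, hq, rfl⟩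
    linarith [h (mutInfo pX q - R) q hq (by linarith)]

lemma ErF_mono (hpX : IsPMF pX) (hp : IsChannel p) (hG : ∀ u, 0 ≤ G u)
    (hGH : ∀ u, G u ≤ H u) : ErF G R pX p ≤ ErF H R pX p := by
  refine le_csInf ⟨_, p, hp, rfl⟩ ?_
  rintro _ ⟨q, hq, rfl⟩
  linarith [ErF_le hpX hp (fun q _ => hG (mutInfo pX q - R)) hq, hGH (mutInfo pX q - R)]

lemma ErF_le_apply_infoBound_sub (hpX : IsPMF pX) (hp : IsChannel p) (hG₀ : ∀ u, 0 ≤ G u)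
    (hG : Monotone G) : ErF G R pX p ≤ G (infoBound 𝒳 𝒴 - R) :=
  calc ErF G R pX p ≤ condKL pX p p + G (mutInfo pX p - R) :=
        ErF_le hpX hp (fun q _ => hG₀ (mutInfo pX q - R)) hp
    _ ≤ G (infoBound 𝒳 𝒴 - R) := by
        rw [condKL_self, zero_add]
        exact hG (by linarith [mutInfo_le_infoBound hpX hp])

end Exponents

section Infima

variable {ι : Type*} {s : Set ι}

lemma zero_le_sInf_iff_of_forall_le {f : ι → ℝ} {b : ℝ} (hb : ∀ i ∈ s, b ≤ f i) :
    0 ≤ sInf {v | ∃ i ∈ s, v = f i} ↔ ∀ i ∈ s, 0 ≤ f i := by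
  refine ⟨fun h i hi => h.trans (csInf_le ⟨b, ?_⟩ ⟨i, hi, rfl⟩), fun h => Real.sInf_nonneg ?_⟩
  · rintro _ ⟨j, hj, rfl⟩
    exact hb j hj
  · rintro _ ⟨i, hi, rfl⟩
    exact h i hi

lemma EReal.neg_sInf_le_iff {g : ι → EReal} {x : EReal} :
    -sInf {v | ∃ i ∈ s, v = g i} ≤ x ↔ ∀ i ∈ s, -x ≤ g i := by
  rw [EReal.neg_le, le_sInf_iff]
  constructor
  · exact fun h i hi => h _ ⟨i, hi, rfl⟩
  · rintro h _ ⟨i, hi, rfl⟩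
    exact h i hi

lemma EReal.neg_coe_le_sub_coe_iff {a b : ℝ} {x : EReal} :
    -(b : EReal) ≤ x - a ↔ ((a - b : ℝ) : EReal) ≤ x := by
  rw [EReal.le_sub_iff_add_le (.inl (EReal.coe_ne_bot a)) (.inl (EReal.coe_ne_top a)),
    ← EReal.coe_neg, ← EReal.coe_add, neg_add_eq_sub]

/-- When `f` is unbounded below on `s`, so is `g`, and both infima are the junk value `0`. -/
lemma sInf_le_sInf_of_le_of_le_add {f g : ι → ℝ} (c : ℝ) (hfg : ∀ i ∈ s, f i ≤ g i)
    (hgf : ∀ i ∈ s, g i ≤ f i + c) :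
    sInf {v | ∃ i ∈ s, v = f i} ≤ sInf {v | ∃ i ∈ s, v = g i} := by
  by_cases hf : BddBelow {v | ∃ i ∈ s, v = f i}
  · rcases s.eq_empty_or_nonempty with rfl | ⟨i₀, hi₀⟩
    · simp
    refine le_csInf ⟨_, i₀, hi₀, rfl⟩ ?_
    rintro _ ⟨i, hi, rfl⟩
    exact (csInf_le hf ⟨i, hi, rfl⟩).trans (hfg i hi)
  · have hg : ¬BddBelow {v | ∃ i ∈ s, v = g i} := by
      rintro ⟨b, hb⟩
      refine hf ⟨b - c, ?_⟩
      rintro _ ⟨i, hi, rfl⟩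
      linarith [hb ⟨i, hi, rfl⟩, hgf i hi]
    rw [Real.sInf_of_not_bddBelow hf, Real.sInf_of_not_bddBelow hg]

end Infima

section Inverses

variable {α β : Type*} [LinearOrder α] [Preorder β] [Nonempty α] {F G : α → β}

lemma StrictMono.monotone_invFun (hG : StrictMono G) (hGs : Surjective G) :
    Monotone (invFun G) := fun a b hab =>
  hG.le_iff_le.1 <| by rwa [rightInverse_invFun hGs a, rightInverse_invFun hGs b]

lemma StrictMono.invFun_le_invFun (hG : StrictMono G) (hGs : Surjective G) (hFs : Surjective F)
    (hGF : ∀ a, G a ≤ F a) (b : β) : invFun F b ≤ invFun G b :=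
  hG.le_iff_le.1 <| by
    rw [rightInverse_invFun hGs b]
    exact (hGF _).trans_eq (rightInverse_invFun hFs b)

end Inverses

section RelativeMinimax

variable {𝒳 𝒴 : Type*} [Fintype 𝒳] [Fintype 𝒴] {pX : 𝒳 → ℝ} {𝒲 : Set (𝒳 → 𝒴 → ℝ)}
  {α : (𝒳 → 𝒴 → ℝ) → ℝ} {R : ℝ}

theorem zero_le_sInf_ErF_sub_iff (hpX : IsPMF pX) (h𝒲 : ∀ p ∈ 𝒲, IsChannel p) {C : ℝ}
    (hα : ∀ p ∈ 𝒲, α p ≤ C) {F : ℝ → ℝ} (hF : Monotone F) :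
    0 ≤ sInf {v : ℝ | ∃ p ∈ 𝒲, v = ErF F R pX p - α p} ↔
      ∀ t : ℝ, -(sInf {v : EReal | ∃ p ∈ 𝒲, v = EspE (R + t) pX p - (α p : EReal)})
        ≤ (F t : EReal) := by
  have hbdd : ∀ p ∈ 𝒲, -infoBound 𝒳 𝒴 + F (-infoBound 𝒳 𝒴 - R) - C ≤ ErF F R pX p - α p :=
    fun p hp => by
      linarith [le_ErF hpX (h𝒲 p hp) (fun q hq => hF.le_apply_mutInfo_sub (R := R) hpX hq),
        hα p hp]
  simp only [zero_le_sInf_iff_of_forall_le hbdd, EReal.neg_sInf_le_iff,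
    EReal.neg_coe_le_sub_coe_iff, sub_nonneg]
  exact ⟨fun h t p hp => (le_ErF_iff hpX (h𝒲 p hp) hF).1 (h p hp) t,
    fun h p hp => (le_ErF_iff hpX (h𝒲 p hp) hF).2 fun t => h t p hp⟩

theorem sInf_ErF_invFun_sub_le {F Fstar : ℝ → ℝ} (hpX : IsPMF pX)
    (h𝒲 : ∀ p ∈ 𝒲, IsChannel p) (hF : Surjective F) (hFstar : StrictMono Fstar)
    (hFstar_surj : Surjective Fstar) (hle : ∀ t, Fstar t ≤ F t) (β : (𝒳 → 𝒴 → ℝ) → ℝ) :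
    sInf {v : ℝ | ∃ p ∈ 𝒲, v = ErF (fun u : ℝ => max 0 (invFun F u)) R pX p - β p}
      ≤ sInf {v : ℝ | ∃ p ∈ 𝒲, v = ErF (fun u : ℝ => max 0 (invFun Fstar u)) R pX p - β p} := by
  set G : ℝ → ℝ := fun u => max 0 (invFun F u)
  set Gstar : ℝ → ℝ := fun u => max 0 (invFun Fstar u)
  have hG₀ : ∀ u, 0 ≤ G u := fun u => le_max_left _ _
  have hGstar₀ : ∀ u, 0 ≤ Gstar u := fun u => le_max_left _ _
  have hGstar : Monotone Gstar := fun u v huv =>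
    max_le_max le_rfl (hFstar.monotone_invFun hFstar_surj huv)
  have hGG : ∀ u, G u ≤ Gstar u := fun u =>
    max_le_max le_rfl (hFstar.invFun_le_invFun hFstar_surj hF hle u)
  refine sInf_le_sInf_of_le_of_le_add (Gstar (infoBound 𝒳 𝒴 - R) + infoBound 𝒳 𝒴)
    (fun p hp => ?_) (fun p hp => ?_)
  · linarith [ErF_mono (R := R) hpX (h𝒲 p hp) hG₀ hGG]
  · linarith [ErF_le_apply_infoBound_sub (R := R) hpX (h𝒲 p hp) hGstar₀ hGstar,
      le_ErF (R := R) hpX (h𝒲 p hp) (fun q _ => hG₀ (mutInfo pX q - R))]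

end RelativeMinimax

theorem relative_minimax_characterization_general {𝒳 𝒴 : Type*} [Fintype 𝒳] [Fintype 𝒴]
    (pX : 𝒳 → ℝ) (hpX : IsPMF pX)
    (𝒲 : Set (𝒳 → 𝒴 → ℝ))
    (h𝒲ch : ∀ p ∈ 𝒲, IsChannel p)
    (α : (𝒳 → 𝒴 → ℝ) → ℝ)
    (hαbdd : ∃ C : ℝ, ∀ p ∈ 𝒲, |α p| ≤ C)
    (R : ℝ) :
    (∀ F : ℝ → ℝ, Continuous F → Monotone F →
      (0 ≤ sInf {v : ℝ | ∃ p ∈ 𝒲, v = ErF F R pX p - α p} ↔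
        ∀ t : ℝ,
          -(sInf {v : EReal | ∃ p ∈ 𝒲, v = EspE (R + t) pX p - (α p : EReal)})
            ≤ (F t : EReal)))
    ∧
    (∀ Fstar : ℝ → ℝ, Continuous Fstar → StrictMono Fstar → Function.Bijective Fstar →
      (∀ t : ℝ, (Fstar t : EReal)
          = -(sInf {v : EReal | ∃ p ∈ 𝒲, v = EspE (R + t) pX p - (α p : EReal)})) →
      (0 ≤ sInf {v : ℝ | ∃ p ∈ 𝒲, v = ErF Fstar R pX p - α p})
      ∧ ∀ β : (𝒳 → 𝒴 → ℝ) → ℝ,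
        ∀ F : ℝ → ℝ, Continuous F → StrictMono F → Function.Bijective F →
          0 ≤ sInf {v : ℝ | ∃ p ∈ 𝒲, v = ErF F R pX p - α p} →
          sInf {v : ℝ | ∃ p ∈ 𝒲,
              v = ErF (fun u : ℝ => max 0 (Function.invFun F u)) R pX p - β p}
            ≤ sInf {v : ℝ | ∃ p ∈ 𝒲,
              v = ErF (fun u : ℝ => max 0 (Function.invFun Fstar u)) R pX p - β p}) := by
  obtain ⟨C, hC⟩ := hαbdd
  have feasible_iff := fun F (hF : Monotone F) =>
    zero_le_sInf_ErF_sub_iff (R := R) hpX h𝒲ch (fun p hp => (abs_le.1 (hC p hp)).2) hF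
  refine ⟨fun F _ hF => feasible_iff F hF, fun Fstar _ hFstar hFstar_bij hFstar_eq => ?_⟩
  refine ⟨(feasible_iff Fstar hFstar.monotone).2 fun t => (hFstar_eq t).ge, ?_⟩
  intro β F _ hF hF_bij hF_feasible
  have hle : ∀ t, Fstar t ≤ F t := fun t => EReal.coe_le_coe_iff.1 <|
    (hFstar_eq t).trans_le ((feasible_iff F hF.monotone).1 hF_feasible t)
  exact sInf_ErF_invFun_sub_le hpX h𝒲ch hF_bij.2 hFstar hFstar_bij.2 hle β

/-- relative minimax characterization: For bounded continuous
`α : 𝒲 → ℝ`, a continuous nondecreasing `F` satisfies `Δ_α E_{r,F}(R,pX,𝒲) ≥ 0`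
iff `F(t) ≥ F^{L*}(t) := -Δ_α E_sp(R+t,pX,𝒲)` for all `t`; hence any real-valued
realization `F*` of `F^{L*}` is the pointwise-minimal feasible penalty function and
maximizes the relative erasure exponent (for any reference `β`) over all feasible
continuous increasing penalty functions. -/
theorem relative_minimax_characterization {𝒳 𝒴 : Type*} [Fintype 𝒳] [Fintype 𝒴]
    (pX : 𝒳 → ℝ) (hpX : IsPMF pX)
    (𝒲 : Set (𝒳 → 𝒴 → ℝ)) (h𝒲ne : 𝒲.Nonempty) (h𝒲cpt : IsCompact 𝒲)
    (h𝒲ch : ∀ p ∈ 𝒲, IsChannel p)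
    (α : (𝒳 → 𝒴 → ℝ) → ℝ) (hαcont : ContinuousOn α 𝒲)
    (hαbdd : ∃ C : ℝ, ∀ p ∈ 𝒲, |α p| ≤ C)
    (R : ℝ) :
    (∀ F : ℝ → ℝ, Continuous F → Monotone F →
      (0 ≤ sInf {v : ℝ | ∃ p ∈ 𝒲, v = ErF F R pX p - α p} ↔
        ∀ t : ℝ,
          -(sInf {v : EReal | ∃ p ∈ 𝒲, v = EspE (R + t) pX p - (α p : EReal)})
            ≤ (F t : EReal)))
    ∧
    (∀ Fstar : ℝ → ℝ, Continuous Fstar → StrictMono Fstar → Function.Bijective Fstar →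
      (∀ t : ℝ, (Fstar t : EReal)
          = -(sInf {v : EReal | ∃ p ∈ 𝒲, v = EspE (R + t) pX p - (α p : EReal)})) →
      (0 ≤ sInf {v : ℝ | ∃ p ∈ 𝒲, v = ErF Fstar R pX p - α p})
      ∧ ∀ β : (𝒳 → 𝒴 → ℝ) → ℝ,
        ∀ F : ℝ → ℝ, Continuous F → StrictMono F → Function.Bijective F →
          0 ≤ sInf {v : ℝ | ∃ p ∈ 𝒲, v = ErF F R pX p - α p} →
          sInf {v : ℝ | ∃ p ∈ 𝒲,
              v = ErF (fun u : ℝ => max 0 (Function.invFun F u)) R pX p - β p}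
            ≤ sInf {v : ℝ | ∃ p ∈ 𝒲,
              v = ErF (fun u : ℝ => max 0 (Function.invFun Fstar u)) R pX p - β p}) :=
  relative_minimax_characterization_general pX hpX 𝒲 h𝒲ch α hαbdd R
end
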